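/- The Dunkl kernel on the real line satisfies |E_α(-ixy)| ≤ 1 for all real x, y, where E_α(λx) = j_α(iλx) + (λx/(2(α+1))) j_{α+1}(iλx) and j_α is the normalized Bessel function of order α > -1/2. -/

import Mathlib

open Complex

/-- The normalized Bessel function `j_α(z) = Γ(α+1) ∑ (-1)^n (z/2)^{2n} / (n! Γ(n+α+1))`. -/
noncomputable def normBessel (α : ℝ) (z : ℂ) : ℂ :=
  Complex.Gamma (α + 1) *
    ∑' n : ℕ, ((-1 : ℂ) ^ n * (z / 2) ^ (2 * n) /
      ((n.factorial : ℂ) * Complex.Gamma ((n : ℂ) + α + 1)))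

/-- The Dunkl kernel `E_α(z) = j_α(iz) + (z/(2(α+1))) j_{α+1}(iz)`. -/
noncomputable def dunklKernel (α : ℝ) (z : ℂ) : ℂ :=
  normBessel α (Complex.I * z) +
    (z / (2 * ((α : ℂ) + 1))) * normBessel (α + 1) (Complex.I * z)

/-!
For real `r` the Bessel functions `j_α(r)`, `j_{α+1}(r)` are real, so
`E_α(-ir) = j_α(r) - i (r / (2(α+1))) j_{α+1}(r)`, and since `j_α' = -(r / (2(α+1))) j_{α+1}`,
`|E_α(-ir)|² = j_α(r)² + j_α'(r)²`. Together with `r j_{α+1}' = 2(α+1) (j_α - j_{α+1})` this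
gives `d/dr |E_α(-ir)|² = -(2α+1) r j_{α+1}(r)² / (2(α+1)²)`, so for `α > -1/2` the squared
modulus is largest at `r = 0`, where it equals `1`.
-/

section EvenPowerSeries

variable {a : ℕ → ℝ} {κ : ℝ}

lemma summable_mul_pow_two_mul (ha : ∀ n, |a n| ≤ κ ^ n / n.factorial) (r : ℝ) :
    Summable fun n => a n * r ^ (2 * n) := by
  refine (Real.summable_pow_div_factorial (κ * r ^ 2)).of_norm_bounded fun n => ?_
  rw [Real.norm_eq_abs, abs_mul, pow_mul, abs_pow, abs_of_nonneg (sq_nonneg r), mul_pow,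
    mul_div_right_comm]
  exact mul_le_mul_of_nonneg_right (ha n) (by positivity)

lemma norm_mul_deriv_pow_two_mul_le (ha : ∀ n, |a n| ≤ κ ^ n / n.factorial) {R z : ℝ}
    (hR : 1 ≤ R) (hz : |z| ≤ R) (n : ℕ) :
    ‖a n * (2 * n * z ^ (2 * n - 1))‖ ≤ 2 * ((2 * κ * R ^ 2) ^ n / n.factorial) := by
  have hz' : |z| ^ (2 * n - 1) ≤ (R ^ 2) ^ n := by
    rw [← pow_mul]
    exact (pow_le_pow_left₀ (abs_nonneg z) hz _).trans (pow_le_pow_right₀ hR (Nat.sub_le _ _))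
  have hn : (2 * n : ℝ) ≤ 2 * 2 ^ n := by
    have : (n : ℝ) ≤ 2 ^ n := by exact_mod_cast Nat.lt_two_pow_self.le
    linarith
  calc ‖a n * (2 * n * z ^ (2 * n - 1))‖ = |a n| * ((2 * n) * |z| ^ (2 * n - 1)) := by
        rw [Real.norm_eq_abs, abs_mul, abs_mul, abs_pow,
          abs_of_nonneg (by positivity : (0 : ℝ) ≤ 2 * n)]
    _ ≤ κ ^ n / n.factorial * ((2 * 2 ^ n) * (R ^ 2) ^ n) :=
        mul_le_mul (ha n) (mul_le_mul hn hz' (by positivity) (by positivity)) (by positivity)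
          ((abs_nonneg _).trans (ha n))
    _ = 2 * ((2 * κ * R ^ 2) ^ n / n.factorial) := by ring

lemma summable_mul_deriv_pow_two_mul (ha : ∀ n, |a n| ≤ κ ^ n / n.factorial) (r : ℝ) :
    Summable fun n => a n * (2 * n * r ^ (2 * n - 1)) :=
  ((Real.summable_pow_div_factorial _).mul_left 2).of_norm_bounded
    (norm_mul_deriv_pow_two_mul_le ha (le_max_left 1 |r|) (le_max_right 1 |r|))

lemma hasDerivAt_tsum_mul_pow_two_mul (ha : ∀ n, |a n| ≤ κ ^ n / n.factorial) (r : ℝ) :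
    HasDerivAt (fun r => ∑' n, a n * r ^ (2 * n))
      (∑' n, a n * (2 * n * r ^ (2 * n - 1))) r := by
  -- the derivative series is only dominated uniformly on bounded sets
  have hR : 1 ≤ |r| + 1 := le_add_of_nonneg_left (abs_nonneg r)
  refine hasDerivAt_tsum_of_isPreconnected (g' := fun n z => a n * (2 * n * z ^ (2 * n - 1)))
    ((Real.summable_pow_div_factorial _).mul_left 2)
    Metric.isOpen_ball (convex_ball 0 (|r| + 1)).isPreconnected (fun n z _ => ?_)
    (fun n z hz => norm_mul_deriv_pow_two_mul_le ha hR ?_ n)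
    (Metric.mem_ball_self (by positivity)) (summable_mul_pow_two_mul ha 0) ?_
  · simpa using (hasDerivAt_pow (2 * n) z).const_mul (a n)
  · exact (Real.dist_0_eq_abs z ▸ Metric.mem_ball.mp hz).le
  · simp

end EvenPowerSeries

noncomputable def besselCoeff (ν : ℝ) (n : ℕ) : ℝ :=
  (-1) ^ n * Real.Gamma (ν + 1) / (4 ^ n * n.factorial * Real.Gamma (n + ν + 1))

noncomputable def normBesselReal (ν r : ℝ) : ℝ :=
  ∑' n, besselCoeff ν n * r ^ (2 * n)

section Bessel

variable {ν : ℝ}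

lemma besselCoeff_zero (hν : -1 < ν) : besselCoeff ν 0 = 1 := by
  have : Real.Gamma (ν + 1) ≠ 0 := (Real.Gamma_pos_of_pos (by linarith)).ne'
  simp [besselCoeff, this]

lemma besselCoeff_succ_mul (hν : -1 < ν) (n : ℕ) :
    besselCoeff ν (n + 1) * (2 * (n + 1)) = -besselCoeff (ν + 1) n / (2 * (ν + 1)) := by
  have hΓ : Real.Gamma (ν + 1 + 1) = (ν + 1) * Real.Gamma (ν + 1) :=
    Real.Gamma_add_one (by linarith)
  have : (0 : ℝ) < ν + 1 := by linarith
  have hpos : 0 < Real.Gamma (n + ν + 2) :=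
    Real.Gamma_pos_of_pos (by linarith [n.cast_nonneg (α := ℝ)])
  unfold besselCoeff
  rw [hΓ, Nat.factorial_succ, show ((n + 1 : ℕ) : ℝ) + ν + 1 = n + ν + 2 by push_cast; ring,
    show (n : ℝ) + (ν + 1) + 1 = n + ν + 2 by ring]
  push_cast
  field_simp
  ring

lemma add_mul_besselCoeff_add_one (hν : -1 < ν) (n : ℕ) :
    (n + ν + 1) * besselCoeff (ν + 1) n = (ν + 1) * besselCoeff ν n := by
  have hpos : 0 < (n : ℝ) + ν + 1 := by linarith [n.cast_nonneg (α := ℝ)]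
  have hΓ : Real.Gamma (n + ν + 1 + 1) = (n + ν + 1) * Real.Gamma (n + ν + 1) :=
    Real.Gamma_add_one hpos.ne'
  have : 0 < Real.Gamma (n + ν + 1) := Real.Gamma_pos_of_pos hpos
  unfold besselCoeff
  rw [Real.Gamma_add_one (by linarith), show (n : ℝ) + (ν + 1) + 1 = n + ν + 1 + 1 by ring, hΓ]
  field_simp

lemma besselCoeff_succ (hν : -1 < ν) (n : ℕ) :
    besselCoeff ν (n + 1) = -besselCoeff ν n / (4 * (n + 1) * (n + ν + 1)) := by
  have h := besselCoeff_succ_mul hν n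
  have h' := add_mul_besselCoeff_add_one hν n
  have hν' : ν + 1 ≠ 0 := by linarith
  have : (n : ℝ) + ν + 1 ≠ 0 := by linarith [n.cast_nonneg (α := ℝ)]
  field_simp at h ⊢
  refine mul_right_cancel₀ hν' ?_
  linear_combination ((n : ℝ) + ν + 1) * h - h'

lemma abs_besselCoeff_le (hν : -1 < ν) (n : ℕ) :
    |besselCoeff ν n| ≤ (4 * (ν + 1))⁻¹ ^ n / n.factorial := by
  induction n with
  | zero => simp [besselCoeff_zero hν]
  | succ n ih =>
    have hν' : 0 < ν + 1 := by linarith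
    have hd : 4 * (n + 1) * (ν + 1) ≤ 4 * ((n : ℝ) + 1) * (n + ν + 1) := by
      gcongr; linarith [n.cast_nonneg (α := ℝ)]
    have hD : 0 < 4 * ((n : ℝ) + 1) * (n + ν + 1) := lt_of_lt_of_le (by positivity) hd
    calc |besselCoeff ν (n + 1)|
        = |besselCoeff ν n| / (4 * ((n : ℝ) + 1) * (n + ν + 1)) := by
          rw [besselCoeff_succ hν, abs_div, abs_neg, abs_of_pos hD]
      _ ≤ (4 * (ν + 1))⁻¹ ^ n / n.factorial / (4 * (n + 1) * (ν + 1)) := by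
          gcongr
      _ = (4 * (ν + 1))⁻¹ ^ (n + 1) / (n + 1).factorial := by
          rw [Nat.factorial_succ, pow_succ]; push_cast; field_simp

lemma summable_besselCoeff_mul_pow (hν : -1 < ν) (r : ℝ) :
    Summable fun n => besselCoeff ν n * r ^ (2 * n) :=
  summable_mul_pow_two_mul (abs_besselCoeff_le hν) r

lemma normBesselReal_zero (hν : -1 < ν) : normBesselReal ν 0 = 1 := by
  rw [normBesselReal, tsum_eq_single 0 fun n hn => by simp [hn], besselCoeff_zero hν]
  simp

lemma hasDerivAt_normBesselReal (hν : -1 < ν) (r : ℝ) :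
    HasDerivAt (normBesselReal ν) (-(r / (2 * (ν + 1))) * normBesselReal (ν + 1) r) r := by
  refine (hasDerivAt_tsum_mul_pow_two_mul (abs_besselCoeff_le hν) r).congr_deriv ?_
  rw [(summable_mul_deriv_pow_two_mul (abs_besselCoeff_le hν) r).tsum_eq_zero_add,
    normBesselReal, ← tsum_mul_left]
  simp only [CharP.cast_eq_zero, mul_zero, zero_mul, zero_add]
  refine tsum_congr fun n => ?_
  have h := besselCoeff_succ_mul hν n
  rw [show 2 * (n + 1) - 1 = 2 * n + 1 by omega, pow_succ]
  push_cast
  linear_combination (r * r ^ (2 * n)) * h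

lemma mul_deriv_normBesselReal_add_one (hν : -1 < ν) (r : ℝ) :
    r * deriv (normBesselReal (ν + 1)) r
      = 2 * (ν + 1) * (normBesselReal ν r - normBesselReal (ν + 1) r) := by
  have hν' : -1 < ν + 1 := by linarith
  unfold normBesselReal
  rw [(hasDerivAt_tsum_mul_pow_two_mul (abs_besselCoeff_le hν') r).deriv, ← tsum_mul_left,
    ← (summable_besselCoeff_mul_pow hν r).tsum_sub
    (summable_besselCoeff_mul_pow hν' r), ← tsum_mul_left]
  refine tsum_congr fun n => ?_
  have h := add_mul_besselCoeff_add_one hν n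
  rcases n with _ | n
  · simp [besselCoeff_zero hν, besselCoeff_zero hν']
  · rw [show 2 * (n + 1) = 2 * n + 1 + 1 by omega, Nat.add_sub_cancel, pow_succ]
    push_cast at h ⊢
    linear_combination (2 * r ^ (2 * n + 1) * r) * h

end Bessel

lemma normBessel_ofReal (ν r : ℝ) : normBessel ν r = normBesselReal ν r := by
  rw [normBesselReal, Complex.ofReal_tsum, normBessel, ← tsum_mul_left]
  refine tsum_congr fun n => ?_
  rw [show (n : ℂ) + ν + 1 = (n + ν + 1 : ℝ) by push_cast; rfl,
    show (ν : ℂ) + 1 = (ν + 1 : ℝ) by push_cast; rfl, Complex.Gamma_ofReal, Complex.Gamma_ofReal,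
    besselCoeff, div_pow, pow_mul, pow_mul, pow_mul]
  push_cast
  ring

noncomputable def dunklNormSq (α r : ℝ) : ℝ :=
  normBesselReal α r ^ 2 + (r / (2 * (α + 1))) ^ 2 * normBesselReal (α + 1) r ^ 2

lemma sq_norm_dunklKernel_neg_I_mul (α r : ℝ) :
    ‖dunklKernel α (-I * r)‖ ^ 2 = dunklNormSq α r := by
  have h : dunklKernel α (-I * r)
      = normBesselReal α r + (-(r / (2 * (α + 1))) * normBesselReal (α + 1) r : ℝ) * I := by
    rw [dunklKernel, show I * (-I * r) = (r : ℂ) by rw [← mul_assoc, mul_neg, I_mul_I]; ring,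
      normBessel_ofReal, normBessel_ofReal]
    push_cast
    ring
  rw [h, Complex.sq_norm, Complex.normSq_add_mul_I, dunklNormSq]
  ring

section DunklNormSq

variable {α : ℝ}

lemma dunklNormSq_zero (hα : -1 < α) : dunklNormSq α 0 = 1 := by
  simp [dunklNormSq, normBesselReal_zero hα]

lemma hasDerivAt_dunklNormSq (hα : -1 < α) (r : ℝ) :
    HasDerivAt (dunklNormSq α)
      (-((2 * α + 1) / (2 * (α + 1) ^ 2) * r * normBesselReal (α + 1) r ^ 2)) r := by
  have ha := hasDerivAt_normBesselReal hα r
  have hb := ((hasDerivAt_normBesselReal (by linarith : -1 < α + 1) r).differentiableAt).hasDerivAt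
  have hrb := mul_deriv_normBesselReal_add_one hα r
  have hq := ((hasDerivAt_id r).div_const (2 * (α + 1))).pow 2
  refine ((ha.pow 2).add (hq.mul (hb.pow 2))).congr_deriv ?_
  have : α + 1 ≠ 0 := by linarith
  simp only [Pi.pow_apply, id, Nat.cast_ofNat, Nat.add_one_sub_one, pow_one]
  field_simp
  linear_combination r * normBesselReal (α + 1) r * hrb

lemma dunklNormSq_le_one (hα : -1 / 2 < α) (r : ℝ) : dunklNormSq α r ≤ 1 := by
  have hderiv := hasDerivAt_dunklNormSq (by linarith : -1 < α)
  have hcont : Continuous (dunklNormSq α) :=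
    continuous_iff_continuousAt.mpr fun r => (hderiv r).continuousAt
  have hdiff : Differentiable ℝ (dunklNormSq α) := fun r => (hderiv r).differentiableAt
  have hc : 0 ≤ (2 * α + 1) / (2 * (α + 1) ^ 2) := by
    exact div_nonneg (by linarith) (by positivity)
  rw [← dunklNormSq_zero (by linarith : -1 < α)]
  rcases le_total r 0 with hr | hr
  · refine monotoneOn_of_deriv_nonneg (convex_Iic 0) hcont.continuousOn hdiff.differentiableOn
      (fun s hs => ?_) hr Set.self_mem_Iic hr
    rw [interior_Iic] at hs
    rw [(hderiv s).deriv, neg_nonneg]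
    exact mul_nonpos_of_nonpos_of_nonneg (mul_nonpos_of_nonneg_of_nonpos hc (le_of_lt hs))
      (sq_nonneg _)
  · refine antitoneOn_of_deriv_nonpos (convex_Ici 0) hcont.continuousOn hdiff.differentiableOn
      (fun s hs => ?_) Set.self_mem_Ici hr hr
    rw [interior_Ici] at hs
    rw [(hderiv s).deriv, neg_nonpos]
    exact mul_nonneg (mul_nonneg hc (le_of_lt hs)) (sq_nonneg _)

end DunklNormSq

/-- The Dunkl kernel satisfies `|E_α(-ixy)| ≤ 1` for all real `x, y`, when `α > -1/2`. -/
theorem dunklKernel_abs_le_one (α : ℝ) (hα : α > -1/2) (x y : ℝ) :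
    ‖dunklKernel α (-Complex.I * x * y)‖ ≤ 1 := by
  rw [show -I * x * y = -I * ((x * y : ℝ) : ℂ) by push_cast; ring,
    ← sq_le_one_iff₀ (norm_nonneg _), sq_norm_dunklKernel_neg_I_mul]
  exact dunklNormSq_le_one hα (x * y)
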